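/- arXiv:1805.05637 — 2 statements merged into one kernel-verified Lean document; each statement's English description precedes it below -/
import Mathlib

section
/- Let G be a countable directed graph, F : G_Ar → ℝ a potential, β ∈ ℝ, and v, w vertices of G such that there exist finite paths from v to w and from w to v. Then {βF(μ) − βF(μ') : μ, μ' ∈ P_f(G), s(μ) = r(μ) = s(μ') = r(μ') = v} = {βF(μ) − βF(μ') : μ, μ' ∈ P_f(G), s(μ) = r(μ) = s(μ') = r(μ') = w}. In particular, the subgroup of ℝ whose closure defines R_{G,F} does not depend on the choice of vertex v in the strongly connected set NW_G of non-wandering vertices. -/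
open MeasureTheory
open scoped ENNReal

/-- A countable directed graph: countable sets of vertices and arrows together with
source and range maps. -/
structure CDG where
  V : Type
  A : Type
  countV : Countable V
  countA : Countable A
  src : A → V
  rng : A → V

attribute [instance] CDG.countV CDG.countA

namespace CDG

/-- The space `P(G)` of infinite paths in `G`. -/
abbrev PathSpace (G : CDG) : Type :=
  {p : ℕ → G.A // ∀ i : ℕ, G.rng (p i) = G.src (p (i + 1))}

/-- The source vertex of an infinite path. -/
def isrc {G : CDG} (p : G.PathSpace) : G.V := G.src (p.1 0)

/-- The shift map `σ` on `P(G)`. -/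
def shift {G : CDG} (p : G.PathSpace) : G.PathSpace :=
  ⟨fun i => p.1 (i + 1), fun i => p.2 (i + 1)⟩

/-- A countable set carries the discrete (Borel) σ-algebra. -/
instance (G : CDG) : MeasurableSpace G.A := ⊤

/-- A finite path in `G`: a base vertex together with a (possibly empty) string of
composable arrows starting at the base vertex.  A finite path with no arrows is a vertex. -/
structure FinPath (G : CDG) where
  base : G.V
  arrows : List G.A
  head_src : ∀ a ∈ arrows.head?, G.src a = base
  chain : arrows.Chain' fun a b => G.rng a = G.src b

namespace FinPath

variable {G : CDG}

/-- The length `|μ|` of a finite path. -/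
def length (μ : FinPath G) : ℕ := μ.arrows.length

/-- The source `s(μ)` of a finite path. -/
def fsrc (μ : FinPath G) : G.V := μ.base

/-- The range `r(μ)` of a finite path. -/
def frng (μ : FinPath G) : G.V := μ.arrows.getLast?.elim μ.base G.rng

/-- A vertex, regarded as a finite path of length `0`. -/
def ofVertex (G : CDG) (v : G.V) : FinPath G :=
  ⟨v, [], by intro a ha; simp at ha, List.IsChain.nil⟩

/-- Concatenation `μδ` of composable finite paths. -/
def concat (μ δ : FinPath G) (h : δ.base = μ.frng) : FinPath G where
  base := μ.base
  arrows := μ.arrows ++ δ.arrows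
  head_src := by
    intro a ha
    cases hμ : μ.arrows with
    | nil =>
        rw [hμ] at ha
        simp only [List.nil_append] at ha
        have h1 : G.src a = δ.base := δ.head_src a ha
        have h2 : μ.frng = μ.base := by simp [FinPath.frng, hμ]
        rw [h1, h, h2]
    | cons b l =>
        rw [hμ] at ha
        simp only [List.cons_append, List.head?_cons, Option.mem_def,
          Option.some.injEq] at ha
        cases ha
        exact μ.head_src _ (by rw [hμ]; rfl)
  chain := by
    refine List.IsChain.append μ.chain δ.chain ?_
    intro x hx y hy
    rw [Option.mem_def] at hx
    have h1 : μ.frng = G.rng x := by simp [FinPath.frng, hx]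
    have h2 : G.src y = δ.base := δ.head_src y hy
    rw [h2, h, h1]

end FinPath

/-- The extension of a potential `F : G_Ar → ℝ` to finite paths:
`F(μ) = Σ_{i} F(a_i)`, with `F(v) = 0` for vertices. -/
def pot {G : CDG} (F : G.A → ℝ) (μ : FinPath G) : ℝ := (μ.arrows.map F).sum

/-- The cylinder set `Z(μ)` of a finite path `μ`. -/
def cyl {G : CDG} (μ : FinPath G) : Set G.PathSpace :=
  {p | G.src (p.1 0) = μ.base ∧
    ∀ (i : ℕ) (h : i < μ.arrows.length), p.1 i = μ.arrows.get ⟨i, h⟩}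

/-- The cylinder set `Z(v)` of a vertex `v`. -/
def cylV (G : CDG) (v : G.V) : Set G.PathSpace := {p | G.src (p.1 0) = v}

/-- An `e^{βF}`-conformal measure on `P(G)`: a non-zero Borel measure giving finite
measure to each `Z(v)` and satisfying `m(σ(B ∩ Z(a))) = e^{βF(a)} m(B ∩ Z(a))`. -/
structure IsConformal (G : CDG) (F : G.A → ℝ) (β : ℝ)
    (m : Measure G.PathSpace) : Prop where
  ne_zero : m ≠ 0
  vert_fin : ∀ v : G.V, m (cylV G v) < ⊤
  conformal : ∀ (a : G.A) (B : Set G.PathSpace), MeasurableSet B →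
      m (shift '' (B ∩ {p : G.PathSpace | p.1 0 = a})) =
        ENNReal.ofReal (Real.exp (β * F a)) * m (B ∩ {p : G.PathSpace | p.1 0 = a})

/-- The set `NW_G` of non-wandering vertices: those supporting a loop. -/
def NW (G : CDG) : Set G.V :=
  {v | ∃ μ : FinPath G, 0 < μ.length ∧ μ.fsrc = v ∧ μ.frng = v}

/-- The set `V_∞` of sinks and infinite emitters. -/
def Vinf (G : CDG) : Set G.V :=
  {v | (∀ a : G.A, G.src a ≠ v) ∨ {a : G.A | G.src a = v}.Infinite}

/-- A hereditary subset of vertices. -/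
def Hereditary (G : CDG) (H : Set G.V) : Prop :=
  ∀ a : G.A, G.src a ∈ H → G.rng a ∈ H

/-- A saturated subset of vertices. -/
def Saturated (G : CDG) (H : Set G.V) : Prop :=
  ∀ v : G.V, v ∉ Vinf G → (∀ a : G.A, G.src a = v → G.rng a ∈ H) → v ∈ H

/-- `G` is cofinal when the only non-empty hereditary and saturated subset of
vertices is the set of all vertices. -/
def Cofinal (G : CDG) : Prop :=
  ∀ H : Set G.V, H.Nonempty → Hereditary G H → Saturated G H → H = Set.univ

/-- `P(G)_rec`: the paths passing through every arrow of `NW_Ar` infinitely often. -/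
def recSet (G : CDG) : Set G.PathSpace :=
  {p | ∀ a : G.A, G.src a ∈ NW G → ∀ n : ℕ, ∃ i ≥ n, p.1 i = a}

/-- `P(G)_wan`: the paths visiting every vertex at most finitely many times. -/
def wanSet (G : CDG) : Set G.PathSpace :=
  {p | ∀ v : G.V, {i : ℕ | G.src (p.1 i) = v}.Finite}

/-- The matrix entry `A(β)^n_{v,w} = Σ_μ e^{-βF(μ)} ∈ [0,∞]`, summing over finite
paths `μ` of length `n` with `s(μ) = v` and `r(μ) = w`. -/
noncomputable def Apow (G : CDG) (F : G.A → ℝ) (β : ℝ) (n : ℕ) (v w : G.V) : ℝ≥0∞ :=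
  ∑' μ : {μ : FinPath G // μ.length = n ∧ μ.fsrc = v ∧ μ.frng = w},
    ENNReal.ofReal (Real.exp (-(β * pot F μ.1)))

/-- An `A(β)`-harmonic vector: non-zero, finite, non-negative, and harmonic at
every vertex. -/
def IsHarmonicVec (G : CDG) (F : G.A → ℝ) (β : ℝ) (ψ : G.V → ℝ≥0∞) : Prop :=
  ψ ≠ 0 ∧ (∀ v : G.V, ψ v ≠ ⊤) ∧
    ∀ v : G.V, ψ v =
      ∑' a : {a : G.A // G.src a = v},
        ENNReal.ofReal (Real.exp (-(β * F a.1))) * ψ (G.rng a.1)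

end CDG

/-! Given paths `p : w → v` and `q : v → w`, the map `μ ↦ pμq` sends loops at `v` to loops at
`w` and adds the constant `F(p) + F(q)` to the potential, which cancels in differences. -/

namespace CDG

variable {G : CDG}

namespace FinPath

@[simp]
lemma fsrc_concat (μ δ : FinPath G) (h : δ.base = μ.frng) :
    (μ.concat δ h).fsrc = μ.fsrc := rfl

@[simp]
lemma frng_concat (μ δ : FinPath G) (h : δ.base = μ.frng) :
    (μ.concat δ h).frng = δ.frng := by
  rcases hδ : δ.arrows.getLast? with _ | a
  · have hnil : δ.arrows = [] := List.getLast?_eq_none_iff.mp hδ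
    simp [frng, concat, hnil, h]
  · simp [frng, concat, List.getLast?_append, hδ]

end FinPath

@[simp]
lemma pot_concat (F : G.A → ℝ) (μ δ : FinPath G) (h : δ.base = μ.frng) :
    pot F (μ.concat δ h) = pot F μ + pot F δ := by
  simp [pot, FinPath.concat]

/-- The subgroup of `ℝ` whose closure is `R_{G,F}`; the vertex `v` counts as a loop at `v`. -/
def loopPotDiffs (F : G.A → ℝ) (β : ℝ) (v : G.V) : Set ℝ :=
  {x : ℝ | ∃ μ μ' : FinPath G,
    μ.fsrc = v ∧ μ.frng = v ∧ μ'.fsrc = v ∧ μ'.frng = v ∧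
    x = β * pot F μ - β * pot F μ'}

lemma exists_loop_conj (F : G.A → ℝ) {v w : G.V} {p q μ : FinPath G}
    (hp₁ : p.fsrc = w) (hp₂ : p.frng = v) (hq₁ : q.fsrc = v) (hq₂ : q.frng = w)
    (hμ₁ : μ.fsrc = v) (hμ₂ : μ.frng = v) :
    ∃ ν : FinPath G, ν.fsrc = w ∧ ν.frng = w ∧ pot F ν = pot F p + pot F μ + pot F q := by
  have hpμ : μ.base = p.frng := hμ₁.trans hp₂.symm
  have hμq : q.base = (p.concat μ hpμ).frng := by
    rw [FinPath.frng_concat, hμ₂]; exact hq₁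
  exact ⟨(p.concat μ hpμ).concat q hμq, hp₁, by simp [hq₂], by simp⟩

lemma loopPotDiffs_subset (F : G.A → ℝ) (β : ℝ) {v w : G.V}
    (hvw : ∃ μ : FinPath G, μ.fsrc = v ∧ μ.frng = w)
    (hwv : ∃ μ : FinPath G, μ.fsrc = w ∧ μ.frng = v) :
    loopPotDiffs F β v ⊆ loopPotDiffs F β w := by
  obtain ⟨q, hq₁, hq₂⟩ := hvw
  obtain ⟨p, hp₁, hp₂⟩ := hwv
  rintro x ⟨μ, μ', hμ₁, hμ₂, hμ'₁, hμ'₂, rfl⟩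
  obtain ⟨ν, hν₁, hν₂, hν⟩ := exists_loop_conj F hp₁ hp₂ hq₁ hq₂ hμ₁ hμ₂
  obtain ⟨ν', hν'₁, hν'₂, hν'⟩ := exists_loop_conj F hp₁ hp₂ hq₁ hq₂ hμ'₁ hμ'₂
  exact ⟨ν, ν', hν₁, hν₂, hν'₁, hν'₂, by rw [hν, hν']; ring⟩

end CDG

open CDG in
/-- if there are finite paths from `v` to `w` and from `w` to `v`, the sets
of differences `βF(μ) - βF(μ')` over loops based at `v`, resp. at `w`, coincide. -/
theorem stmt2 (G : CDG) (F : G.A → ℝ) (β : ℝ) (v w : G.V)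
    (hvw : ∃ μ : FinPath G, μ.fsrc = v ∧ μ.frng = w)
    (hwv : ∃ μ : FinPath G, μ.fsrc = w ∧ μ.frng = v) :
    {x : ℝ | ∃ μ μ' : FinPath G,
      μ.fsrc = v ∧ μ.frng = v ∧ μ'.fsrc = v ∧ μ'.frng = v ∧
      x = β * pot F μ - β * pot F μ'} =
    {x : ℝ | ∃ μ μ' : FinPath G,
      μ.fsrc = w ∧ μ.frng = w ∧ μ'.fsrc = w ∧ μ'.frng = w ∧
      x = β * pot F μ - β * pot F μ'} :=
  (loopPotDiffs_subset F β hvw hwv).antisymm (loopPotDiffs_subset F β hwv hvw)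
end

section
/- Let G be a countable directed graph which is cofinal and whose set NW_G of non-wandering vertices is non-empty, F a potential on G, and β ∈ ℝ. Then no e^{βF}-conformal measure annihilates P(NW_G): for every e^{βF}-conformal measure m one has m(P(NW_G)) > 0, where P(NW_G) = {p ∈ P(G) : s(p_i) ∈ NW_G for all i}. -/
open MeasureTheory
open scoped ENNReal

/-!
The vertices `v` with `m(Z(v)) = 0` form a hereditary and saturated set: conformality gives
`m(Z(r(a))) = e^{βF(a)} m(Z(a))`, and `Z(v)` is the countable union of the `Z(a)` with
`s(a) = v`. As `m ≠ 0`, cofinality forces `m(Z(v)) > 0` for every vertex `v`.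

For a non-wandering `v`, the vertices that cannot reach `v` also form a hereditary and saturated
set, which misses `v`; by cofinality it is empty. So every vertex on a path leaving `v` lies on a
loop through `v`, i.e. `Z(v) ⊆ P(NW_G)`, and `m(P(NW_G)) ≥ m(Z(v)) > 0`.
-/

namespace CDG

variable {G : CDG}

def Adj (G : CDG) (x y : G.V) : Prop := ∃ a : G.A, G.src a = x ∧ G.rng a = y

open Relation

lemma transGen_adj_iff_exists_isChain {x y : G.V} :
    TransGen G.Adj x y ↔ ∃ (a : G.A) (l : List G.A), G.src a = x ∧
      (a :: l).IsChain (fun a b => G.rng a = G.src b) ∧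
      G.rng ((a :: l).getLast (List.cons_ne_nil a l)) = y := by
  constructor
  · intro h
    induction h using TransGen.head_induction_on with
    | single h =>
      obtain ⟨a, rfl, rfl⟩ := h
      exact ⟨a, [], rfl, List.isChain_singleton a, rfl⟩
    | head h _ ih =>
      obtain ⟨a, rfl, hra⟩ := h
      obtain ⟨b, l, hsb, hchain, hlast⟩ := ih
      exact ⟨a, b :: l, rfl, List.isChain_cons_cons.2 ⟨hra.trans hsb.symm, hchain⟩,
        by rwa [List.getLast_cons_cons]⟩
  · rintro ⟨a, l, rfl, hchain, rfl⟩
    induction l generalizing a with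
    | nil => exact TransGen.single ⟨a, rfl, rfl⟩
    | cons b l ih =>
      obtain ⟨hab, hchain⟩ := List.isChain_cons_cons.1 hchain
      rw [List.getLast_cons_cons]
      exact TransGen.head ⟨a, rfl, hab⟩ (ih b hchain)

lemma transGen_adj_iff_exists_finPath {x y : G.V} :
    TransGen G.Adj x y ↔ ∃ μ : FinPath G, 0 < μ.length ∧ μ.fsrc = x ∧ μ.frng = y := by
  rw [transGen_adj_iff_exists_isChain]
  constructor
  · rintro ⟨a, l, rfl, hchain, rfl⟩
    refine ⟨⟨G.src a, a :: l, fun b hb => ?_, hchain⟩, Nat.succ_pos _, rfl, ?_⟩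
    · rw [List.head?_cons, Option.mem_some_iff] at hb
      rw [hb]
    · simp only [FinPath.frng, List.getLast?_eq_some_getLast (List.cons_ne_nil a l)]
      rfl
  · rintro ⟨⟨base, arrows, hhead, hchain⟩, hlen, rfl, rfl⟩
    obtain ⟨a, l, rfl⟩ := List.exists_cons_of_length_pos hlen
    refine ⟨a, l, hhead a rfl, hchain, ?_⟩
    simp only [FinPath.frng, List.getLast?_eq_some_getLast (List.cons_ne_nil a l)]
    rfl

lemma mem_NW_iff {v : G.V} : v ∈ NW G ↔ TransGen G.Adj v v :=
  transGen_adj_iff_exists_finPath.symm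

lemma reflTransGen_adj_src (p : G.PathSpace) (i : ℕ) :
    ReflTransGen G.Adj (G.src (p.1 0)) (G.src (p.1 i)) := by
  induction i with
  | zero => exact ReflTransGen.refl
  | succ i ih => exact ih.tail ⟨p.1 i, rfl, p.2 i⟩

lemma Cofinal.reflTransGen_adj_of_mem_NW (hcof : Cofinal G) {v : G.V} (hv : v ∈ NW G)
    (x : G.V) : ReflTransGen G.Adj x v := by
  by_contra hx
  let H : Set G.V := {x | ¬ ReflTransGen G.Adj x v}
  have hered : Hereditary G H := fun a ha hreach => ha (hreach.head ⟨a, rfl, rfl⟩)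
  have sat : Saturated G H := by
    intro u _ hsucc hreach
    obtain rfl | ⟨w, ⟨a, ha, rfl⟩, hreach'⟩ := hreach.cases_head
    · obtain ⟨w, ⟨a, ha, rfl⟩, hreach'⟩ := TransGen.head'_iff.1 (mem_NW_iff.1 hv)
      exact hsucc a ha hreach'
    · exact hsucc a ha hreach'
  have hvH : v ∈ H := hcof H ⟨x, hx⟩ hered sat ▸ Set.mem_univ v
  exact hvH ReflTransGen.refl

lemma Cofinal.src_mem_NW_of_mem_cylV (hcof : Cofinal G) {v : G.V} (hv : v ∈ NW G)
    {p : G.PathSpace} (hp : p ∈ cylV G v) (i : ℕ) : G.src (p.1 i) ∈ NW G := by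
  have hvx : ReflTransGen G.Adj v (G.src (p.1 i)) := hp ▸ reflTransGen_adj_src p i
  exact mem_NW_iff.2 <|
    TransGen.trans_right (hcof.reflTransGen_adj_of_mem_NW hv _) ((mem_NW_iff.1 hv).trans_left hvx)

lemma shift_image_setOf_head_eq (a : G.A) :
    shift '' {p : G.PathSpace | p.1 0 = a} = cylV G (G.rng a) := by
  ext q
  constructor
  · rintro ⟨p, rfl, rfl⟩
    exact (p.2 0).symm
  · intro hq
    refine ⟨⟨fun n => Nat.casesOn n a q.1, ?_⟩, by rfl, rfl⟩
    rintro (_ | i)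
    · exact hq.symm
    · exact q.2 i

variable {F : G.A → ℝ} {β : ℝ} {m : Measure G.PathSpace}

lemma IsConformal.measure_cylV_rng (hm : IsConformal G F β m) (a : G.A) :
    m (cylV G (G.rng a)) =
      ENNReal.ofReal (Real.exp (β * F a)) * m {p : G.PathSpace | p.1 0 = a} := by
  simpa only [Set.univ_inter, shift_image_setOf_head_eq] using
    hm.conformal a Set.univ MeasurableSet.univ

lemma IsConformal.measure_setOf_head_eq_zero_iff (hm : IsConformal G F β m) (a : G.A) :
    m {p : G.PathSpace | p.1 0 = a} = 0 ↔ m (cylV G (G.rng a)) = 0 := by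
  rw [hm.measure_cylV_rng, mul_eq_zero, or_iff_right]
  exact (ENNReal.ofReal_pos.2 (Real.exp_pos _)).ne'

lemma Cofinal.measure_cylV_pos (hcof : Cofinal G) (hm : IsConformal G F β m) (v : G.V) :
    0 < m (cylV G v) := by
  refine pos_iff_ne_zero.2 fun hv => hm.ne_zero ?_
  let H : Set G.V := {v | m (cylV G v) = 0}
  have hered : Hereditary G H := fun a ha =>
    (hm.measure_setOf_head_eq_zero_iff a).1 <|
      measure_mono_null (fun p (hp : p.1 0 = a) => show G.src (p.1 0) = G.src a by rw [hp]) ha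
  have sat : Saturated G H := by
    intro u _ hsucc
    have hcover : cylV G u = ⋃ a : {a : G.A // G.src a = u}, {p : G.PathSpace | p.1 0 = a.1} := by
      ext p
      simp only [cylV, Set.mem_iUnion, Subtype.exists, exists_prop]
      exact ⟨fun hp => ⟨_, hp, rfl⟩, by rintro ⟨a, rfl, rfl⟩; rfl⟩
    show m (cylV G u) = 0
    rw [hcover]
    exact measure_iUnion_null fun a => (hm.measure_setOf_head_eq_zero_iff a.1).2 (hsucc a.1 a.2)
  have hall : ∀ w, w ∈ H := fun w => hcof H ⟨v, hv⟩ hered sat ▸ Set.mem_univ w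
  have huniv : (Set.univ : Set G.PathSpace) = ⋃ w : G.V, cylV G w :=
    (Set.iUnion_eq_univ_iff.2 fun p => ⟨G.src (p.1 0), rfl⟩).symm
  rw [← Measure.measure_univ_eq_zero, huniv]
  exact measure_iUnion_null hall

end CDG

open CDG in
/-- for a cofinal graph with `NW_G ≠ ∅`, no `e^{βF}`-conformal measure
annihilates `P(NW_G)`. -/
theorem stmt7 (G : CDG) (hcof : Cofinal G) (hne : (NW G).Nonempty)
    (F : G.A → ℝ) (β : ℝ) (m : MeasureTheory.Measure G.PathSpace)
    (hm : IsConformal G F β m) :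
    0 < m {p : G.PathSpace | ∀ i : ℕ, G.src (p.1 i) ∈ NW G} := by
  obtain ⟨v, hv⟩ := hne
  calc 0 < m (cylV G v) := hcof.measure_cylV_pos hm v
    _ ≤ _ := measure_mono fun p hp i => hcof.src_mem_NW_of_mem_cylV hv hp i
end
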